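/- Let a < d be real numbers, let ρ : ℝ → ℝ be continuous and positive on (a,d), and let X̄ ∈ ℝ³ be a constant vector with first component 0. Set X(p) := ρ(p₁) • X̄. Let λ : ℝ³ → (ℝ³ →L[ℝ] ℝ) be a C¹ toroidally periodic 1-form satisfying i_X dλ = −dr, i.e. Dλ(p)(X(p))(v) − Dλ(p)(v)(X(p)) = −v₁ for all p ∈ (a,d) × ℝ² and all v ∈ ℝ³ (where r denotes the first coordinate function). Then for all a < r₁ ≤ r₂ < d, the function c(r) := ∫_{[0,1]²} λ(r, θ, φ)(X̄) dθ dφ satisfies c(r₂) − c(r₁) = ∫_{r₁}^{r₂} (1/ρ(r)) dr. -/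

import Mathlib

/-!
Evaluating `i_X dλ = -dr` on `∂_r` and dividing by `ρ` gives `∂_r (λ X̄) = X̄ (λ ∂_r) + 1/ρ`
on `(a,d) × T²`. As `X̄` is tangent to the tori, `X̄ (λ ∂_r)` is a combination of the `θ`- and
`φ`-derivatives of a periodic function, so its integral over every torus vanishes; hence
`c' = 1/ρ`. Concretely: the fundamental theorem of calculus in `r` and Fubini on
`[r₁, r₂] × [0,1]²`.
-/

open Set

/-- A map on `ℝ³ = ℝ × ℝ × ℝ` is toroidally periodic if it is invariant under translation by `1`
in the second and in the third coordinate, so that it descends to `ℝ × T²`. -/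
def TorPeriodic {α : Type*} (f : ℝ × ℝ × ℝ → α) : Prop :=
  ∀ p : ℝ × ℝ × ℝ, f (p.1, p.2.1 + 1, p.2.2) = f p ∧ f (p.1, p.2.1, p.2.2 + 1) = f p

open MeasureTheory

section IteratedIntervalIntegral

variable {E : Type*} [NormedAddCommGroup E] [NormedSpace ℝ E]

theorem intervalIntegral_intervalIntegral_swap_of_continuous {F : ℝ → ℝ → E}
    (hF : Continuous F.uncurry) (a b c d : ℝ) :
    ∫ x in a..b, ∫ y in c..d, F x y = ∫ y in c..d, ∫ x in a..b, F x y :=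
  intervalIntegral_intervalIntegral_swap <|
    (hF.continuousOn.integrableOn_compact (isCompact_uIcc.prod isCompact_uIcc)).mono_set
      (prod_mono uIoc_subset_uIcc uIoc_subset_uIcc)

theorem intervalIntegral_intervalIntegral_add {F G : ℝ → ℝ → E}
    (hF : Continuous F.uncurry) (hG : Continuous G.uncurry) (a b c d : ℝ) :
    ∫ x in a..b, ∫ y in c..d, (F x y + G x y) =
      (∫ x in a..b, ∫ y in c..d, F x y) + ∫ x in a..b, ∫ y in c..d, G x y := by
  have hF' : Continuous fun x => ∫ y in c..d, F x y :=
    intervalIntegral.continuous_parametric_intervalIntegral_of_continuous' hF c d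
  have hG' : Continuous fun x => ∫ y in c..d, G x y :=
    intervalIntegral.continuous_parametric_intervalIntegral_of_continuous' hG c d
  rw [← intervalIntegral.integral_add (hF'.intervalIntegrable a b) (hG'.intervalIntegrable a b)]
  exact intervalIntegral.integral_congr fun x _ => intervalIntegral.integral_add
    ((hF.uncurry_left x).intervalIntegrable c d) ((hG.uncurry_left x).intervalIntegrable c d)

theorem intervalIntegral_intervalIntegral_sub {F G : ℝ → ℝ → E}
    (hF : Continuous F.uncurry) (hG : Continuous G.uncurry) (a b c d : ℝ) :
    ∫ x in a..b, ∫ y in c..d, (F x y - G x y) =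
      (∫ x in a..b, ∫ y in c..d, F x y) - ∫ x in a..b, ∫ y in c..d, G x y := by
  have hF' : Continuous fun x => ∫ y in c..d, F x y :=
    intervalIntegral.continuous_parametric_intervalIntegral_of_continuous' hF c d
  have hG' : Continuous fun x => ∫ y in c..d, G x y :=
    intervalIntegral.continuous_parametric_intervalIntegral_of_continuous' hG c d
  rw [← intervalIntegral.integral_sub (hF'.intervalIntegrable a b) (hG'.intervalIntegrable a b)]
  exact intervalIntegral.integral_congr fun x _ => intervalIntegral.integral_sub
    ((hF.uncurry_left x).intervalIntegrable c d) ((hG.uncurry_left x).intervalIntegrable c d)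

theorem intervalIntegral_intervalIntegral_intervalIntegral_swap {h : ℝ × ℝ × ℝ → E}
    (hh : Continuous h) (a b c d e f : ℝ) :
    ∫ y in c..d, ∫ z in e..f, ∫ x in a..b, h (x, y, z) =
      ∫ x in a..b, ∫ y in c..d, ∫ z in e..f, h (x, y, z) := by
  calc ∫ y in c..d, ∫ z in e..f, ∫ x in a..b, h (x, y, z)
      = ∫ y in c..d, ∫ x in a..b, ∫ z in e..f, h (x, y, z) :=
        intervalIntegral.integral_congr fun y _ =>
          intervalIntegral_intervalIntegral_swap_of_continuous
            (F := fun z x => h (x, y, z)) (by fun_prop) e f a b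
    _ = ∫ x in a..b, ∫ y in c..d, ∫ z in e..f, h (x, y, z) :=
        intervalIntegral_intervalIntegral_swap_of_continuous
          (F := fun y x => ∫ z in e..f, h (x, y, z))
          (intervalIntegral.continuous_parametric_intervalIntegral_of_continuous'
            (f := fun (q : ℝ × ℝ) z => h (q.2, q.1, z)) (by fun_prop) e f) c d a b

end IteratedIntervalIntegral

section Calculus

variable {V E : Type*} [NormedAddCommGroup V] [NormedSpace ℝ V] [NormedAddCommGroup E]
  [NormedSpace ℝ E]

theorem fderiv_clm_apply_const {c : V → V →L[ℝ] E} {x : V} (hc : DifferentiableAt ℝ c x)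
    (u v : V) : fderiv ℝ (fun y => c y u) x v = fderiv ℝ c x v u := by
  simp [fderiv_clm_apply hc (differentiableAt_const u)]

theorem ContDiff.integral_fderiv_line [CompleteSpace E] {g : V → E} (hg : ContDiff ℝ 1 g)
    (x v : V) (a b : ℝ) :
    ∫ t in a..b, fderiv ℝ g (x + t • v) v = g (x + b • v) - g (x + a • v) := by
  have hcont : Continuous fun t : ℝ => fderiv ℝ g (x + t • v) v :=
    (hg.continuous_fderiv_apply one_ne_zero).comp
      (by fun_prop : Continuous fun t : ℝ => (x + t • v, v))
  refine intervalIntegral.integral_eq_sub_of_hasDerivAt (f := fun t => g (x + t • v))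
    (fun t _ => ?_) (hcont.intervalIntegrable a b)
  simpa [Function.comp_def] using
    ((hg.differentiable one_ne_zero _).hasFDerivAt).comp_hasDerivAt t
      (((hasDerivAt_id t).smul_const v).const_add x)

end Calculus

section Torus

variable {E : Type*} [NormedAddCommGroup E] [NormedSpace ℝ E] {g h : ℝ × ℝ × ℝ → E}

/-- The paper's `c(r)`, an average since `T² = (ℝ/ℤ)²` has area `1`. -/
noncomputable def torusAverage (g : ℝ × ℝ × ℝ → E) (r : ℝ) : E :=
  ∫ θ in (0:ℝ)..1, ∫ φ in (0:ℝ)..1, g (r, θ, φ)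

theorem torusAverage_add (hg : Continuous g) (hh : Continuous h) (r : ℝ) :
    torusAverage (fun p => g p + h p) r = torusAverage g r + torusAverage h r :=
  intervalIntegral_intervalIntegral_add (F := fun θ φ => g (r, θ, φ))
    (G := fun θ φ => h (r, θ, φ)) (by fun_prop) (by fun_prop) 0 1 0 1

theorem torusAverage_add_const [CompleteSpace E] (hg : Continuous g) (c : E) (r : ℝ) :
    torusAverage (fun p => g p + c) r = torusAverage g r + c := by
  rw [torusAverage_add hg continuous_const]
  simp only [torusAverage, intervalIntegral.integral_const, sub_zero, one_smul]

theorem torusAverage_smul (c : ℝ) (r : ℝ) :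
    torusAverage (fun p => c • g p) r = c • torusAverage g r := by
  simp only [torusAverage, intervalIntegral.integral_smul]

theorem torusAverage_sub_torusAverage [CompleteSpace E] (hg : ContDiff ℝ 1 g) (r₁ r₂ : ℝ) :
    torusAverage g r₂ - torusAverage g r₁ =
      ∫ r in r₁..r₂, torusAverage (fun p => fderiv ℝ g p (1, 0, 0)) r := by
  have hftc : ∀ θ φ : ℝ, ∫ r in r₁..r₂, fderiv ℝ g (r, θ, φ) (1, 0, 0) =
      g (r₂, θ, φ) - g (r₁, θ, φ) := fun θ φ => by
    simpa using hg.integral_fderiv_line (0, θ, φ) (1, 0, 0) r₁ r₂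
  calc torusAverage g r₂ - torusAverage g r₁
      = ∫ θ in (0:ℝ)..1, ∫ φ in (0:ℝ)..1, (g (r₂, θ, φ) - g (r₁, θ, φ)) :=
        (intervalIntegral_intervalIntegral_sub (F := fun θ φ => g (r₂, θ, φ))
          (G := fun θ φ => g (r₁, θ, φ)) (by fun_prop) (by fun_prop) 0 1 0 1).symm
    _ = ∫ θ in (0:ℝ)..1, ∫ φ in (0:ℝ)..1, ∫ r in r₁..r₂, fderiv ℝ g (r, θ, φ) (1, 0, 0) := by
        simp only [hftc]
    _ = ∫ r in r₁..r₂, torusAverage (fun p => fderiv ℝ g p (1, 0, 0)) r :=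
        intervalIntegral_intervalIntegral_intervalIntegral_swap
          (h := fun p => fderiv ℝ g p (1, 0, 0))
          ((hg.continuous_fderiv one_ne_zero).clm_apply continuous_const) _ _ _ _ _ _

end Torus

namespace TorPeriodic

variable {E : Type*} [NormedAddCommGroup E] [NormedSpace ℝ E] [CompleteSpace E]
  {g : ℝ × ℝ × ℝ → E}

theorem comp {α β : Type*} {f : ℝ × ℝ × ℝ → α} (hf : TorPeriodic f) (k : α → β) :
    TorPeriodic (k ∘ f) :=
  fun p => ⟨congrArg k (hf p).1, congrArg k (hf p).2⟩

theorem integral_fderiv_θ_eq_zero (hper : TorPeriodic g) (hg : ContDiff ℝ 1 g) (r φ : ℝ) :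
    ∫ θ in (0:ℝ)..1, fderiv ℝ g (r, θ, φ) (0, 1, 0) = 0 := by
  have hftc := hg.integral_fderiv_line (r, 0, φ) (0, 1, 0) 0 1
  have hθ := (hper (r, 0, φ)).1
  simp only [Prod.smul_mk, Prod.mk_add_mk, smul_eq_mul, mul_zero, mul_one, add_zero, zero_add,
    zero_smul] at hftc hθ
  rw [hftc, hθ, sub_self]

theorem integral_fderiv_φ_eq_zero (hper : TorPeriodic g) (hg : ContDiff ℝ 1 g) (r θ : ℝ) :
    ∫ φ in (0:ℝ)..1, fderiv ℝ g (r, θ, φ) (0, 0, 1) = 0 := by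
  have hftc := hg.integral_fderiv_line (r, θ, 0) (0, 0, 1) 0 1
  have hφ := (hper (r, θ, 0)).2
  simp only [Prod.smul_mk, Prod.mk_add_mk, smul_eq_mul, mul_zero, mul_one, add_zero, zero_add,
    zero_smul] at hftc hφ
  rw [hftc, hφ, sub_self]

theorem torusAverage_fderiv_eq_zero (hper : TorPeriodic g) (hg : ContDiff ℝ 1 g)
    {w : ℝ × ℝ × ℝ} (hw : w.1 = 0) (r : ℝ) :
    torusAverage (fun p => fderiv ℝ g p w) r = 0 := by
  have hcont (v : ℝ × ℝ × ℝ) : Continuous fun p => fderiv ℝ g p v :=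
    (hg.continuous_fderiv one_ne_zero).clm_apply continuous_const
  have hθ : torusAverage (fun p => fderiv ℝ g p (0, 1, 0)) r = 0 := by
    rw [torusAverage, intervalIntegral_intervalIntegral_swap_of_continuous
      (F := fun θ φ => fderiv ℝ g (r, θ, φ) (0, 1, 0)) (by fun_prop)]
    simp [hper.integral_fderiv_θ_eq_zero hg]
  have hφ : torusAverage (fun p => fderiv ℝ g p (0, 0, 1)) r = 0 := by
    simp [torusAverage, hper.integral_fderiv_φ_eq_zero hg]
  have hw' : w = w.2.1 • (0, 1, 0) + w.2.2 • (0, 0, 1) := by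
    ext <;> simp [hw]
  rw [hw']
  simp only [map_add, map_smul]
  rw [torusAverage_add ((hcont (0, 1, 0)).fun_const_smul w.2.1)
    ((hcont (0, 0, 1)).fun_const_smul w.2.2), torusAverage_smul, torusAverage_smul, hθ, hφ,
    smul_zero, smul_zero, add_zero]

end TorPeriodic

theorem torus_average_difference_of_euler_form_general
    (a d : ℝ)
    (ρ : ℝ → ℝ) (hρpos : ∀ r ∈ Ioo a d, 0 < ρ r)
    (Xbar : ℝ × ℝ × ℝ) (hXbar : Xbar.1 = 0)
    (X : ℝ × ℝ × ℝ → ℝ × ℝ × ℝ) (hX : ∀ p, X p = ρ p.1 • Xbar)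
    (lam : ℝ × ℝ × ℝ → (ℝ × ℝ × ℝ →L[ℝ] ℝ))
    (hlamC1 : ContDiff ℝ 1 lam) (hlamper : TorPeriodic lam)
    (hiXdlam : ∀ p : ℝ × ℝ × ℝ, p.1 ∈ Ioo a d →
      ∀ v : ℝ × ℝ × ℝ, fderiv ℝ lam p (X p) v - fderiv ℝ lam p v (X p) = -v.1) :
    ∀ r₁ r₂ : ℝ, a < r₁ → r₁ ≤ r₂ → r₂ < d →
      (∫ θ in (0:ℝ)..1, ∫ φ in (0:ℝ)..1, lam (r₂, θ, φ) Xbar) -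
      (∫ θ in (0:ℝ)..1, ∫ φ in (0:ℝ)..1, lam (r₁, θ, φ) Xbar) =
      ∫ r in r₁..r₂, 1 / ρ r := by
  intro r₁ r₂ har₁ hr₁₂ hr₂d
  have hdiff (p : ℝ × ℝ × ℝ) : DifferentiableAt ℝ lam p := hlamC1.differentiable one_ne_zero p
  have hf : ContDiff ℝ 1 fun p => lam p (1, 0, 0) := hlamC1.clm_apply contDiff_const
  have euler (p : ℝ × ℝ × ℝ) (hp : p.1 ∈ Ioo a d) :
      fderiv ℝ (fun q => lam q Xbar) p (1, 0, 0) =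
        fderiv ℝ (fun q => lam q (1, 0, 0)) p Xbar + 1 / ρ p.1 := by
    have h := hiXdlam p hp (1, 0, 0)
    simp only [hX, map_smul, smul_apply, smul_eq_mul] at h
    rw [fderiv_clm_apply_const (hdiff p), fderiv_clm_apply_const (hdiff p)]
    field_simp [(hρpos p.1 hp).ne']
    linarith
  have average (r : ℝ) (hr : r ∈ Ioo a d) :
      torusAverage (fun p => fderiv ℝ (fun q => lam q Xbar) p (1, 0, 0)) r = 1 / ρ r :=
    calc torusAverage (fun p => fderiv ℝ (fun q => lam q Xbar) p (1, 0, 0)) r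
        = torusAverage (fun p => fderiv ℝ (fun q => lam q (1, 0, 0)) p Xbar + 1 / ρ r) r :=
          intervalIntegral.integral_congr fun θ _ => intervalIntegral.integral_congr
            fun φ _ => euler (r, θ, φ) hr
      _ = 1 / ρ r := by
          rw [torusAverage_add_const ((hf.continuous_fderiv one_ne_zero).clm_apply
            continuous_const),
            TorPeriodic.torusAverage_fderiv_eq_zero (g := fun p => lam p (1, 0, 0))
              (hlamper.comp fun L => L (1, 0, 0)) hf hXbar, zero_add]
  refine (torusAverage_sub_torusAverage (g := fun p => lam p Xbar)
    (hlamC1.clm_apply contDiff_const) r₁ r₂).trans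
    (intervalIntegral.integral_congr fun r hr => average r ?_)
  rw [uIcc_of_le hr₁₂] at hr
  exact ⟨har₁.trans_le hr.1, hr.2.trans_lt hr₂d⟩

/-- For a vector field `X(p) = ρ(p₁) • X̄` tangent to the tori `{r} × T²` and a
`C¹` toroidally periodic `1`-form `λ` with `i_X dλ = -dr` on `(a,d) × T²`, the torus averages
`c(r) = ∫ λ(r,θ,φ)(X̄) dθ dφ` satisfy `c(r₂) - c(r₁) = ∫_{r₁}^{r₂} dr/ρ(r)`. -/
theorem torus_average_difference_of_euler_form
    (a d : ℝ) (had : a < d)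
    (ρ : ℝ → ℝ) (hρcont : Continuous ρ) (hρpos : ∀ r ∈ Ioo a d, 0 < ρ r)
    (Xbar : ℝ × ℝ × ℝ) (hXbar : Xbar.1 = 0)
    (X : ℝ × ℝ × ℝ → ℝ × ℝ × ℝ) (hX : ∀ p, X p = ρ p.1 • Xbar)
    (lam : ℝ × ℝ × ℝ → (ℝ × ℝ × ℝ →L[ℝ] ℝ))
    (hlamC1 : ContDiff ℝ 1 lam) (hlamper : TorPeriodic lam)
    (hiXdlam : ∀ p : ℝ × ℝ × ℝ, p.1 ∈ Ioo a d →
      ∀ v : ℝ × ℝ × ℝ, fderiv ℝ lam p (X p) v - fderiv ℝ lam p v (X p) = -v.1) :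
    ∀ r₁ r₂ : ℝ, a < r₁ → r₁ ≤ r₂ → r₂ < d →
      (∫ θ in (0:ℝ)..1, ∫ φ in (0:ℝ)..1, lam (r₂, θ, φ) Xbar) -
      (∫ θ in (0:ℝ)..1, ∫ φ in (0:ℝ)..1, lam (r₁, θ, φ) Xbar) =
      ∫ r in r₁..r₂, 1 / ρ r :=
  torus_average_difference_of_euler_form_general a d ρ hρpos Xbar hXbar X hX lam hlamC1 hlamper
    hiXdlam
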